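/- (Set Cover correspondence, proof of Theorem 20) Let U be a finite set and S_1, ..., S_m ⊆ U with ⋃_{i=1}^m S_i = U. Let G be the star graph with center s and leaves v_1, ..., v_m, and for each e ∈ U let V_e = {v_i : e ∈ S_i}. Then the minimum cardinality of an edge set F of G such that for every e ∈ U at least one vertex of V_e is not reachable from s in G with F deleted, equals the minimum cardinality of a set cover, i.e., the minimum of |C| over C ⊆ [m] with ⋃_{i∈C} S_i = U. -/

import Mathlib

/-- The star graph with center `none` and leaves `some i`, `i : Fin m`. -/
def starGraph (m : ℕ) : SimpleGraph (Option (Fin m)) :=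
  SimpleGraph.fromEdgeSet {e | ∃ i : Fin m, e = s((none : Option (Fin m)), some i)}

lemma starGraph_reach_iff (m : ℕ) (F : Set (Sym2 (Option (Fin m)))) (i : Fin m)
    (hrc : ((starGraph m).deleteEdges F).Reachable none (some i)) :
    s((none : Option (Fin m)), some i) ∉ F := by
  obtain ⟨w⟩ := hrc
  intro hF
  cases h : w.reverse with
  | cons hadj q =>
    rw [SimpleGraph.deleteEdges_adj] at hadj
    obtain ⟨hadj', hnF⟩ := hadj
    rw [starGraph, SimpleGraph.fromEdgeSet_adj] at hadj'
    obtain ⟨⟨j, hj⟩, hne⟩ := hadj'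
    rw [Sym2.eq_iff] at hj
    rcases hj with ⟨h1, h2⟩ | ⟨h1, h2⟩
    · exact Option.some_ne_none _ h1
    · apply hnF
      rw [h2, Option.some_inj] at *
      rw [h1] at hF ⊢
      rwa [Sym2.eq_swap] at hF

/-- (Set Cover correspondence, proof of Theorem 20) Let `U` be a finite set and
`S_1, …, S_m ⊆ U` with `⋃_i S_i = U`. In the star graph with center `s` and leaves
`v_1, …, v_m`, the minimum cardinality of a set `F` of edges such that for every `e ∈ U`
at least one vertex of `V_e = {v_i : e ∈ S_i}` is not reachable from `s` after deleting `F`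
equals the minimum cardinality of a set cover `C ⊆ [m]` with `⋃_{i∈C} S_i = U`. -/
theorem star_set_cover_correspondence {β : Type*} [DecidableEq β]
    (U : Finset β) (m : ℕ) (hm : 1 ≤ m)
    (S : Fin m → Finset β) (hSU : ∀ i, S i ⊆ U) (hcov : ∀ e ∈ U, ∃ i, e ∈ S i) :
    sInf {n : ℕ | ∃ F : Finset (Sym2 (Option (Fin m))),
        (↑F : Set (Sym2 (Option (Fin m)))) ⊆ (starGraph m).edgeSet ∧
        (∀ e ∈ U, ∃ i : Fin m, e ∈ S i ∧
          ¬ ((starGraph m).deleteEdges (↑F : Set (Sym2 (Option (Fin m))))).Reachable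
              none (some i)) ∧
        F.card = n} =
      sInf {n : ℕ | ∃ C : Finset (Fin m), (∀ e ∈ U, ∃ i ∈ C, e ∈ S i) ∧ C.card = n} := by
  have hinj : Function.Injective (fun i : Fin m => s((none : Option (Fin m)), some i)) := by
    intro a b hab
    simp only [Sym2.eq_iff] at hab
    rcases hab with ⟨_, h⟩ | ⟨h, _⟩ <;> simp_all
  congr 1
  ext n
  constructor
  · rintro ⟨F, hFsub, hFprop, rfl⟩
    refine ⟨Finset.univ.filter (fun i => s((none : Option (Fin m)), some i) ∈ F), ?_, ?_⟩
    · intro e he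
      obtain ⟨i, hiS, hnr⟩ := hFprop e he
      refine ⟨i, ?_, hiS⟩
      simp only [Finset.mem_filter, Finset.mem_univ, true_and]
      by_contra hnot
      apply hnr
      apply SimpleGraph.Adj.reachable
      rw [SimpleGraph.deleteEdges_adj]
      refine ⟨?_, hnot⟩
      rw [starGraph, SimpleGraph.fromEdgeSet_adj]
      exact ⟨⟨i, rfl⟩, by simp⟩
    · -- card equality: F = image of the filter
      have hFeq : F = (Finset.univ.filter
          (fun i => s((none : Option (Fin m)), some i) ∈ F)).image
          (fun i => s((none : Option (Fin m)), some i)) := by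
        ext e
        simp only [Finset.mem_image, Finset.mem_filter, Finset.mem_univ, true_and]
        constructor
        · intro he
          have := hFsub he
          rw [starGraph, SimpleGraph.edgeSet_fromEdgeSet] at this
          obtain ⟨⟨i, hi⟩, _⟩ := this
          exact ⟨i, hi ▸ he, hi.symm⟩
        · rintro ⟨i, hi, rfl⟩
          exact hi
      have h2 := congrArg Finset.card hFeq
      rw [Finset.card_image_of_injective _ hinj] at h2
      exact h2.symm
  · rintro ⟨C, hC, rfl⟩
    refine ⟨C.image (fun i => s((none : Option (Fin m)), some i)), ?_, ?_, ?_⟩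
    · intro e he
      simp only [Finset.coe_image, Set.mem_image, Finset.mem_coe] at he
      obtain ⟨i, _, rfl⟩ := he
      rw [starGraph, SimpleGraph.edgeSet_fromEdgeSet]
      exact ⟨⟨i, rfl⟩, by simp⟩
    · intro e he
      obtain ⟨i, hiC, hiS⟩ := hC e he
      refine ⟨i, hiS, fun hr => ?_⟩
      exact starGraph_reach_iff m _ i hr (by
        simp only [Finset.coe_image, Set.mem_image, Finset.mem_coe]
        exact ⟨i, hiC, rfl⟩)
    · exact Finset.card_image_of_injective _ hinj
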